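/- Let D be a triangulated category, σ = (Z, P) a stability condition, and E an object admitting an HN filtration with factors A₁ ∈ P(φ₁), …, A_l ∈ P(φ_l), φ₁ > ⋯ > φ_l, l ≥ 2. Then there exists k with 2 ≤ k ≤ l and Hom(A_k, A₁[1]) ≠ 0, provided E is indecomposable; consequently gldim σ ≥ φ₁ + 1 − φ_k > 1. -/

import Mathlib

open CategoryTheory CategoryTheory.Limits CategoryTheory.Pretriangulated

universe v u

variable (C : Type u) [Category.{v} C] [Preadditive C] [HasZeroObject C]
  [HasShift C ℤ] [∀ n : ℤ, (shiftFunctor C n).Additive] [Pretriangulated C]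
  [HasFiniteBiproducts C]

/-- A Bridgeland stability condition, encoded by a central charge on objects and a slicing. -/
structure StabilityCondition where
  Z : C → ℂ
  P : ℝ → Set C
  mem_of_iso : ∀ {φ : ℝ} {E F : C}, (E ≅ F) → E ∈ P φ → F ∈ P φ
  charge : ∀ {φ : ℝ} {E : C}, E ∈ P φ → ¬ IsZero E →
    ∃ m : ℝ, 0 < m ∧ Z E = (m : ℂ) * Complex.exp (Real.pi * φ * Complex.I)
  shift_mem : ∀ (φ : ℝ) (E : C), E ∈ P φ ↔ E⟦(1 : ℤ)⟧ ∈ P (φ + 1)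
  sum_mem : ∀ {φ : ℝ} {X Y : C}, X ∈ P φ → Y ∈ P φ → (X ⊞ Y) ∈ P φ
  summand_mem : ∀ {φ : ℝ} {X Y : C}, (X ⊞ Y) ∈ P φ → X ∈ P φ
  hom_zero : ∀ {φ₁ φ₂ : ℝ}, φ₂ < φ₁ → ∀ {E F : C}, E ∈ P φ₁ → F ∈ P φ₂ →
    ∀ f : E ⟶ F, f = 0
  HN : ∀ E : C, ¬ IsZero E → ∃ (n : ℕ) (obj : Fin (n + 1) → C) (φ : Fin n → ℝ),
    IsZero (obj 0) ∧ Nonempty (obj (Fin.last n) ≅ E) ∧ StrictAnti φ ∧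
    ∀ i : Fin n, ∃ (A : C) (f : obj i.castSucc ⟶ obj i.succ) (g : obj i.succ ⟶ A)
      (h : A ⟶ (obj i.castSucc)⟦(1 : ℤ)⟧),
      (Triangle.mk f g h ∈ distTriang C) ∧ A ∈ P (φ i) ∧ ¬ IsZero A

variable {C}

/-- `E` is semistable iff it lies in some slice. -/
def StabilityCondition.IsSemistable (σ : StabilityCondition C) (E : C) : Prop :=
  ∃ φ : ℝ, E ∈ σ.P φ

/-- The global dimension of a stability condition. -/
noncomputable def StabilityCondition.gldim (σ : StabilityCondition C) : EReal :=
  sSup {d : EReal | ∃ (φ₁ φ₂ : ℝ) (E F : C) (f : E ⟶ F),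
    E ∈ σ.P φ₁ ∧ F ∈ σ.P φ₂ ∧ f ≠ 0 ∧ d = ((φ₂ - φ₁ : ℝ) : EReal)}

/-- An object is indecomposable if it is nonzero and any biproduct decomposition is trivial. -/
def IsIndec (E : C) : Prop :=
  ¬ IsZero E ∧ ∀ (X Y : C), (E ≅ X ⊞ Y) → IsZero X ∨ IsZero Y

/-- `E` is stable of phase `φ`: it is a nonzero object of `P(φ)` admitting no nontrivial
extension decomposition inside `P(φ)` (i.e. it is simple in the abelian category `P(φ)`). -/
def StabilityCondition.IsStableOfPhase (σ : StabilityCondition C) (E : C) (φ : ℝ) : Prop :=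
  E ∈ σ.P φ ∧ ¬ IsZero E ∧ ∀ (A B : C) (f : A ⟶ E) (g : E ⟶ B) (h : B ⟶ A⟦(1 : ℤ)⟧),
    (Triangle.mk f g h ∈ distTriang C) → A ∈ σ.P φ → B ∈ σ.P φ →
    ¬ IsZero A → ¬ IsZero B → False

/-- The Krull–Schmidt property: every nonzero object is a finite biproduct of indecomposables. -/
def KrullSchmidt : Prop :=
  ∀ X : C, ¬ IsZero X → ∃ (m : ℕ) (f : Fin m → C),
    (∀ i, IsIndec (f i)) ∧ Nonempty (X ≅ ⨁ f)

/-! If every map `A k ⟶ (A 0)⟦1⟧` with `k > 0` vanished, a retraction of `obj 1 ≅ A 0` would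
extend step by step along the tower `obj 1 ⟶ ⋯ ⟶ obj n ≅ E`, so `A 0` would be a retract, hence (by
indecomposability) all, of `E`. Then `E` is semistable of phase `φ 0`, so `obj n ⟶ A (n-1)` vanishes
and `A (n-1)⟦-1⟧` splits off `obj (n-1)`; but `obj (n-1)` admits no nonzero map to an object of
phase below all of `φ 0, …, φ (n-2)`, so `A (n-1) = 0`. -/

omit [HasFiniteBiproducts C] in
lemma hom_obj₂_eq_zero_of_distTriang {T : Triangle C} (hT : T ∈ distTriang C) {X : C}
    (h₁ : ∀ u : T.obj₁ ⟶ X, u = 0) (h₃ : ∀ u : T.obj₃ ⟶ X, u = 0) (u : T.obj₂ ⟶ X) :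
    u = 0 := by
  obtain ⟨v, rfl⟩ := T.yoneda_exact₂ hT u (h₁ _)
  rw [h₃ v, comp_zero]

omit [HasFiniteBiproducts C] in
lemma exists_mor₁_comp_eq_of_distTriang {T : Triangle C} (hT : T ∈ distTriang C) {X : C}
    (r : T.obj₁ ⟶ X) (hr : T.mor₃ ≫ r⟦(1 : ℤ)⟧' = 0) : ∃ r' : T.obj₂ ⟶ X, T.mor₁ ≫ r' = r := by
  have hnat := (shiftFunctorCompIsoId C (1 : ℤ) (-1) (by omega)).hom.naturality r
  have h : (-T.mor₃⟦(-1 : ℤ)⟧' ≫ (shiftFunctorCompIsoId C (1 : ℤ) (-1) (by omega)).hom.app _) ≫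
      r = 0 := by
    dsimp at hnat
    rw [Preadditive.neg_comp, Category.assoc, ← hnat, ← Functor.map_comp_assoc, hr,
      Functor.map_zero, zero_comp, neg_zero]
  obtain ⟨r', hr'⟩ := T.invRotate.yoneda_exact₂ (inv_rot_of_distTriang T hT) r h
  exact ⟨r', hr'.symm⟩

omit [HasFiniteBiproducts C] in
lemma nonempty_retract_obj₂_of_distTriang {T : Triangle C} (hT : T ∈ distTriang C) {X : C}
    (h : Retract X T.obj₁) (h₃ : ∀ u : T.obj₃ ⟶ X⟦(1 : ℤ)⟧, u = 0) :
    Nonempty (Retract X T.obj₂) := by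
  obtain ⟨r, hr⟩ := exists_mor₁_comp_eq_of_distTriang hT h.r (h₃ _)
  exact ⟨⟨h.i ≫ T.mor₁, r, by rw [Category.assoc, hr, h.retract]⟩⟩

omit [HasFiniteBiproducts C] in
lemma isZero_obj₃_of_distTriang_of_mor₂_eq_zero {T : Triangle C} (hT : T ∈ distTriang C)
    (h₂ : T.mor₂ = 0) (h : ∀ u : T.obj₁⟦(1 : ℤ)⟧ ⟶ T.obj₃, u = 0) : IsZero T.obj₃ := by
  obtain ⟨u, hu⟩ := T.yoneda_exact₃ hT (𝟙 T.obj₃) (by rw [h₂, zero_comp])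
  rw [IsZero.iff_id_eq_zero, hu, h u, comp_zero]

omit [HasZeroObject C] [Pretriangulated C] [HasFiniteBiproducts C] in
lemma hom_shift_one_eq_zero {X Y : C} (h : ∀ v : X ⟶ Y⟦(-1 : ℤ)⟧, v = 0)
    (u : X⟦(1 : ℤ)⟧ ⟶ Y) : u = 0 := by
  rw [← (shiftFunctor C (-1 : ℤ)).map_eq_zero_iff,
    ← cancel_epi ((shiftFunctorCompIsoId C (1 : ℤ) (-1) (by omega)).inv.app X), comp_zero]
  exact h _

omit [HasFiniteBiproducts C] in
lemma IsIndec.isIso_of_retract {X E : C} (hE : IsIndec E) (h : Retract X E) (hX : ¬ IsZero X) :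
    IsIso h.i := by
  obtain ⟨B, p, q, hT⟩ := distinguished_cocone_triangle h.i
  have hq : q = 0 :=
    (Triangle.mk h.i p q).mor₃_eq_zero_of_mono₁ hT (SplitMono.mono ⟨h.r, h.retract⟩)
  obtain ⟨e, -⟩ := exists_iso_binaryBiproduct_of_distTriang _ hT hq
  rcases hE.2 X B e with hX' | hB
  · exact absurd hX' hX
  · exact ((Triangle.mk h.i p q).isZero₃_iff_isIso₁ hT).1 hB

section Tower

variable {n : ℕ} {obj : Fin (n + 1) → C} {A : Fin n → C}
  {f : ∀ i : Fin n, obj i.castSucc ⟶ obj i.succ} {g : ∀ i : Fin n, obj i.succ ⟶ A i}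
  {w : ∀ i : Fin n, A i ⟶ (obj i.castSucc)⟦(1 : ℤ)⟧}

omit [HasFiniteBiproducts C] in
lemma tower_hom_eq_zero (hT : ∀ i, Triangle.mk (f i) (g i) (w i) ∈ distTriang C)
    (h₀ : IsZero (obj 0)) {X : C} (j : Fin (n + 1))
    (hA : ∀ i : Fin n, i.castSucc < j → ∀ u : A i ⟶ X, u = 0) (u : obj j ⟶ X) : u = 0 := by
  induction j using Fin.induction with
  | zero => exact h₀.eq_of_src _ _
  | succ i ih =>
    exact hom_obj₂_eq_zero_of_distTriang (hT i)
      (ih fun k hk => hA k (hk.trans Fin.castSucc_lt_succ))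
      (hA i Fin.castSucc_lt_succ) u

omit [HasFiniteBiproducts C] in
lemma tower_nonempty_retract (hT : ∀ i, Triangle.mk (f i) (g i) (w i) ∈ distTriang C)
    (m j : Fin (n + 1)) (hmj : m ≤ j)
    (hA : ∀ i : Fin n, m ≤ i.castSucc → ∀ u : A i ⟶ (obj m)⟦(1 : ℤ)⟧, u = 0) :
    Nonempty (Retract (obj m) (obj j)) := by
  induction j using Fin.induction with
  | zero => exact ⟨(Fin.le_zero_iff.1 hmj) ▸ Retract.refl _⟩
  | succ i ih =>
    rcases hmj.eq_or_lt with rfl | hlt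
    · exact ⟨Retract.refl _⟩
    · have hmi : m ≤ i.castSucc := Fin.le_castSucc_iff.2 hlt
      obtain ⟨r⟩ := ih hmi
      exact nonempty_retract_obj₂_of_distTriang (hT i) r (hA i hmi)

end Tower

namespace StabilityCondition

variable (σ : StabilityCondition C)

omit [HasFiniteBiproducts C] in
lemma shift_neg_one_mem {X : C} {φ : ℝ} (hX : X ∈ σ.P φ) : X⟦(-1 : ℤ)⟧ ∈ σ.P (φ - 1) := by
  rw [σ.shift_mem, sub_add_cancel]
  exact σ.mem_of_iso ((shiftFunctorCompIsoId C (-1 : ℤ) 1 (by omega)).app X).symm hX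

omit [HasFiniteBiproducts C] in
lemma le_gldim {E F : C} {φ₁ φ₂ : ℝ} (hE : E ∈ σ.P φ₁) (hF : F ∈ σ.P φ₂) (u : E ⟶ F)
    (hu : u ≠ 0) : ((φ₂ - φ₁ : ℝ) : EReal) ≤ σ.gldim :=
  le_sSup ⟨φ₁, φ₂, E, F, u, hE, hF, hu, rfl⟩

omit [HasFiniteBiproducts C] in
lemma isZero_last_factor_of_mem {m : ℕ} {obj : Fin (m + 2) → C} {A : Fin (m + 1) → C}
    {f : ∀ i : Fin (m + 1), obj i.castSucc ⟶ obj i.succ}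
    {g : ∀ i : Fin (m + 1), obj i.succ ⟶ A i}
    {w : ∀ i : Fin (m + 1), A i ⟶ (obj i.castSucc)⟦(1 : ℤ)⟧}
    (hT : ∀ i, Triangle.mk (f i) (g i) (w i) ∈ distTriang C) (h₀ : IsZero (obj 0))
    {φ : Fin (m + 1) → ℝ} (hanti : StrictAnti φ) (hA : ∀ i, A i ∈ σ.P (φ i))
    {ψ : ℝ} (hE : obj (Fin.last (m + 1)) ∈ σ.P ψ) (hψ : φ (Fin.last m) < ψ) :
    IsZero (A (Fin.last m)) := by
  refine isZero_obj₃_of_distTriang_of_mor₂_eq_zero (hT _) (σ.hom_zero hψ hE (hA _) _) ?_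
  refine hom_shift_one_eq_zero fun v => tower_hom_eq_zero hT h₀ _ (fun k hk u => ?_) v
  have hk : φ (Fin.last m) < φ k := hanti (Fin.castSucc_lt_castSucc_iff.1 hk)
  exact σ.hom_zero (by linarith) (hA k) (σ.shift_neg_one_mem (hA _)) u

end StabilityCondition

/-- If an indecomposable object `E` admits an HN filtration with `l ≥ 2` factors
`A_i ∈ P(φ_i)`, `φ₁ > ⋯ > φ_l`, then some `Hom(A_k, A₁[1]) ≠ 0` with `k ≥ 2`;
consequently `gldim σ ≥ φ₁ + 1 - φ_k > 1`. -/
theorem gldim_gt_one_of_indec_with_long_HN (σ : StabilityCondition C)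
    (E : C) (hE : IsIndec E) (n : ℕ) (hn : 2 ≤ n)
    (obj : Fin (n + 1) → C) (A : Fin n → C) (φ : Fin n → ℝ)
    (h0 : IsZero (obj 0)) (hlast : Nonempty (obj (Fin.last n) ≅ E))
    (hanti : StrictAnti φ)
    (htri : ∀ i : Fin n, ∃ (f : obj i.castSucc ⟶ obj i.succ) (g : obj i.succ ⟶ A i)
      (w : A i ⟶ (obj i.castSucc)⟦(1 : ℤ)⟧), (Triangle.mk f g w ∈ distTriang C))
    (hA : ∀ i : Fin n, A i ∈ σ.P (φ i) ∧ ¬ IsZero (A i)) :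
    ∃ k : Fin n, (⟨0, by omega⟩ : Fin n) < k ∧
      (∃ g : A k ⟶ (A ⟨0, by omega⟩)⟦(1 : ℤ)⟧, g ≠ 0) ∧
      ((φ ⟨0, by omega⟩ + 1 - φ k : ℝ) : EReal) ≤ σ.gldim ∧
      (1 : EReal) < σ.gldim := by
  obtain ⟨m, rfl⟩ : ∃ m, n = m + 1 := ⟨n - 1, by omega⟩
  obtain ⟨eE⟩ := hlast
  choose f g w hT using htri
  set i₀ : Fin (m + 1) := ⟨0, by omega⟩
  have : IsIso (g i₀) := ((Triangle.mk _ _ _).isZero₁_iff_isIso₂ (hT i₀)).1 h0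
  have key : ∃ k, i₀ < k ∧ ∃ u : A k ⟶ (A i₀)⟦(1 : ℤ)⟧, u ≠ 0 := by
    by_contra! hcon
    obtain ⟨r⟩ := tower_nonempty_retract hT i₀.succ (Fin.last _) (Fin.le_last _) fun i hi u => by
      rw [← cancel_mono ((g i₀)⟦(1 : ℤ)⟧'), zero_comp]
      exact hcon i (Fin.succ_le_castSucc_iff.1 hi) _
    let r' := r.trans (Retract.ofIso eE)
    have : IsIso r'.i := hE.isIso_of_retract r' fun h => (hA i₀).2 (h.of_iso (asIso (g i₀)).symm)
    have hmem : obj (Fin.last (m + 1)) ∈ σ.P (φ i₀) :=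
      σ.mem_of_iso ((asIso (g i₀)).symm ≪≫ asIso r'.i ≪≫ eE.symm) (hA i₀).1
    exact (hA _).2 (σ.isZero_last_factor_of_mem hT h0 hanti (fun i => (hA i).1) hmem
      (hanti (Fin.mk_lt_mk.2 (by omega))))
  obtain ⟨k, hk, u, hu⟩ := key
  have hle := σ.le_gldim (hA k).1 ((σ.shift_mem _ _).1 (hA i₀).1) u hu
  have hgt : (1 : EReal) < ((φ i₀ + 1 - φ k : ℝ) : EReal) := by
    have hφ := hanti hk
    exact_mod_cast (by linarith : (1 : ℝ) < φ i₀ + 1 - φ k)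
  exact ⟨k, hk, ⟨u, hu⟩, hle, hgt.trans_le hle⟩
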